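/- arXiv:1503.06929 — 4 statements merged into one kernel-verified Lean document; each statement's English description precedes it below -/
import Mathlib

section
/- Let G₁, G₂ be connected bipartite graphs with bipartitions (A₁, B₁) and (A₂, B₂), each part of size at least 3, and let H₁, H₂ be the corresponding graphs obtained by replacing each edge e = ab with a new vertex c_e adjacent to a and b, and adding all edges between the two parts. Then any isomorphism φ : H₁ → H₂ maps C₁ onto C₂ and A₁ ∪ B₁ onto A₂ ∪ B₂. -/
/-- The graph `H` built from a bipartite graph `G` with bipartition `(A, B)`:
vertices are `A ∪ B` (the original vertices) together with one new vertex `c_e`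
per edge `e`; all edges between `A` and `B` are present, and each `c_e` is
adjacent exactly to the two endpoints of `e`. -/
def Hgraph {V : Type*} (G : SimpleGraph V) (A B : Set V) :
    SimpleGraph (V ⊕ G.edgeSet) where
  Adj x y :=
    match x, y with
    | Sum.inl u, Sum.inl v => u ≠ v ∧ ((u ∈ A ∧ v ∈ B) ∨ (u ∈ B ∧ v ∈ A))
    | Sum.inl u, Sum.inr e => u ∈ (e : Sym2 V)
    | Sum.inr e, Sum.inl u => u ∈ (e : Sym2 V)
    | Sum.inr _, Sum.inr _ => False
  symm := by
    constructor
    rintro (u | e) (v | f) h <;> simp_all <;> tauto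
  loopless := by
    constructor
    rintro (u | e) h <;> simp_all

/-- The order relation of the poset `P_H` on `A ∪ B ∪ C`:
`a ⪯ b` for `a ∈ A`, `b ∈ B`; `a ⪯ c_e` iff `a ∈ A` is an endpoint of `e`;
`c_e ⪯ b` iff `b ∈ B` is an endpoint of `e`; plus reflexivity. -/
def PHle {V : Type*} (G : SimpleGraph V) (A B : Set V) :
    (V ⊕ G.edgeSet) → (V ⊕ G.edgeSet) → Prop
  | Sum.inl u, Sum.inl v => u = v ∨ (u ∈ A ∧ v ∈ B)
  | Sum.inl u, Sum.inr e => u ∈ A ∧ u ∈ (e : Sym2 V)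
  | Sum.inr e, Sum.inl v => v ∈ B ∧ v ∈ (e : Sym2 V)
  | Sum.inr e, Sum.inr f => e = f

/-! The subdivision vertices `c_e` of `H` have degree exactly 2, while every original vertex
is adjacent to the whole opposite part and so has degree at least 3. Graph isomorphisms
preserve degrees, so they cannot exchange the two kinds of vertices. -/

namespace Hgraph

variable {V : Type*} (G : SimpleGraph V) (A B : Set V)

lemma swap_parts : Hgraph G B A = Hgraph G A B := by
  ext (u | e) (v | f) <;> simp only [Hgraph, or_comm]

lemma neighborSet_inr (e : G.edgeSet) :
    (Hgraph G A B).neighborSet (Sum.inr e) = Sum.inl '' {v | v ∈ (e : Sym2 V)} := by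
  ext (u | f) <;> simp [Hgraph]

lemma encard_neighborSet_inr (e : G.edgeSet) :
    ((Hgraph G A B).neighborSet (Sum.inr e)).encard = 2 := by
  obtain ⟨e, he⟩ := e
  induction e using Sym2.ind with
  | _ a b =>
    have hendpoints : {v | v ∈ s(a, b)} = ({a, b} : Set V) := Set.ext fun _ => Sym2.mem_iff
    rw [neighborSet_inr, Sum.inl_injective.encard_image, hendpoints, Set.encard_pair he.ne]

variable {A B}

lemma encard_le_encard_neighborSet_inl {v : V} (hvA : v ∈ A) (hvB : v ∉ B) :
    B.encard ≤ ((Hgraph G A B).neighborSet (Sum.inl v)).encard := by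
  rw [← Sum.inl_injective.encard_image]
  refine Set.encard_le_encard ?_
  rintro _ ⟨b, hb, rfl⟩
  exact ⟨fun hvb => hvB (hvb ▸ hb), Or.inl ⟨hvA, hb⟩⟩

lemma three_le_encard_neighborSet_inl (hdisj : Disjoint A B) (hcover : A ∪ B = Set.univ)
    (hA : 3 ≤ A.ncard) (hB : 3 ≤ B.ncard) (v : V) :
    3 ≤ ((Hgraph G A B).neighborSet (Sum.inl v)).encard := by
  have hv : v ∈ A ∪ B := hcover ▸ Set.mem_univ v
  rcases hv with hvA | hvB
  · calc (3 : ℕ∞) ≤ B.ncard := by exact_mod_cast hB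
      _ ≤ B.encard := ENat.natCast_toNat_le_self _
      _ ≤ _ := encard_le_encard_neighborSet_inl G hvA (hdisj.notMem_of_mem_left hvA)
  · rw [← swap_parts]
    calc (3 : ℕ∞) ≤ A.ncard := by exact_mod_cast hA
      _ ≤ A.encard := ENat.natCast_toNat_le_self _
      _ ≤ _ := encard_le_encard_neighborSet_inl G hvB (hdisj.notMem_of_mem_right hvB)

end Hgraph

lemma SimpleGraph.Iso.encard_neighborSet {V W : Type*} {G : SimpleGraph V} {H : SimpleGraph W}
    (φ : G ≃g H) (x : V) :
    (H.neighborSet (φ x)).encard = (G.neighborSet x).encard :=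
  (Set.encard_congr (φ.mapNeighborSet x)).symm

theorem Hgraph_iso_preserves_parts_general
    {V₁ V₂ : Type*}
    (G₁ : SimpleGraph V₁) (G₂ : SimpleGraph V₂)
    (A₁ B₁ : Set V₁) (A₂ B₂ : Set V₂)
    (hdisj₁ : Disjoint A₁ B₁) (hcover₁ : A₁ ∪ B₁ = Set.univ)
    (hdisj₂ : Disjoint A₂ B₂) (hcover₂ : A₂ ∪ B₂ = Set.univ)
    (hA₁ : 3 ≤ A₁.ncard) (hB₁ : 3 ≤ B₁.ncard)
    (hA₂ : 3 ≤ A₂.ncard) (hB₂ : 3 ≤ B₂.ncard)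
    (φ : Hgraph G₁ A₁ B₁ ≃g Hgraph G₂ A₂ B₂) :
    (∀ e : G₁.edgeSet, ∃ f : G₂.edgeSet, φ (Sum.inr e) = Sum.inr f) ∧
    (∀ v : V₁, ∃ w : V₂, φ (Sum.inl v) = Sum.inl w) := by
  have deg₁ := Hgraph.three_le_encard_neighborSet_inl G₁ hdisj₁ hcover₁ hA₁ hB₁
  have deg₂ := Hgraph.three_le_encard_neighborSet_inl G₂ hdisj₂ hcover₂ hA₂ hB₂
  have not_three_le_two : ¬ (3 : ℕ∞) ≤ 2 := by decide
  constructor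
  · intro e
    cases h : φ (Sum.inr e) with
    | inr f => exact ⟨f, rfl⟩
    | inl w =>
      have hdeg := φ.encard_neighborSet (Sum.inr e)
      rw [h, Hgraph.encard_neighborSet_inr] at hdeg
      exact absurd (hdeg ▸ deg₂ w) not_three_le_two
  · intro v
    cases h : φ (Sum.inl v) with
    | inl w => exact ⟨w, rfl⟩
    | inr f =>
      have hdeg := φ.encard_neighborSet (Sum.inl v)
      rw [h, Hgraph.encard_neighborSet_inr] at hdeg
      exact absurd (hdeg ▸ deg₁ v) not_three_le_two

/-- Any isomorphism between `H₁` and `H₂` maps the subdivision vertices `C₁`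
onto `C₂` and the original vertices `A₁ ∪ B₁` onto `A₂ ∪ B₂`. -/
theorem Hgraph_iso_preserves_parts
    {V₁ V₂ : Type*} [Finite V₁] [Finite V₂]
    (G₁ : SimpleGraph V₁) (G₂ : SimpleGraph V₂)
    (A₁ B₁ : Set V₁) (A₂ B₂ : Set V₂)
    (hconn₁ : G₁.Connected) (hconn₂ : G₂.Connected)
    (hdisj₁ : Disjoint A₁ B₁) (hcover₁ : A₁ ∪ B₁ = Set.univ)
    (hedge₁ : ∀ e : G₁.edgeSet, ∃ a ∈ A₁, ∃ b ∈ B₁, (e : Sym2 V₁) = s(a, b))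
    (hdisj₂ : Disjoint A₂ B₂) (hcover₂ : A₂ ∪ B₂ = Set.univ)
    (hedge₂ : ∀ e : G₂.edgeSet, ∃ a ∈ A₂, ∃ b ∈ B₂, (e : Sym2 V₂) = s(a, b))
    (hA₁ : 3 ≤ A₁.ncard) (hB₁ : 3 ≤ B₁.ncard)
    (hA₂ : 3 ≤ A₂.ncard) (hB₂ : 3 ≤ B₂.ncard)
    (φ : Hgraph G₁ A₁ B₁ ≃g Hgraph G₂ A₂ B₂) :
    (∀ e : G₁.edgeSet, ∃ f : G₂.edgeSet, φ (Sum.inr e) = Sum.inr f) ∧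
    (∀ v : V₁, ∃ w : V₂, φ (Sum.inl v) = Sum.inl w) :=
  Hgraph_iso_preserves_parts_general G₁ G₂ A₁ B₁ A₂ B₂ hdisj₁ hcover₁ hdisj₂ hcover₂ hA₁ hB₁ hA₂ hB₂
    φ
end

section
/- Let H be the graph constructed from a bipartite graph G with bipartition (A, B) by adding a vertex c_e adjacent to a and b for each edge e = ab, plus all edges between A and B. Then H is the comparability graph of the poset P_H, i.e., two distinct vertices u, v of H are adjacent if and only if u and v are comparable in P_H. -/
namespace Hgraph

variable {V : Type*} (G : SimpleGraph V) (A B : Set V)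

theorem adj_inl_inl_iff {u v : V} (huv : u ≠ v) :
    (Hgraph G A B).Adj (.inl u) (.inl v) ↔
      PHle G A B (.inl u) (.inl v) ∨ PHle G A B (.inl v) (.inl u) := by
  simp only [Hgraph, PHle]
  tauto

theorem adj_inl_inr_iff {u : V} (hu : u ∈ A ∪ B) (e : G.edgeSet) :
    (Hgraph G A B).Adj (.inl u) (.inr e) ↔
      PHle G A B (.inl u) (.inr e) ∨ PHle G A B (.inr e) (.inl u) := by
  simp only [Hgraph, PHle]
  rcases hu with hA | hB <;> tauto

theorem not_adj_inr_inr (e f : G.edgeSet) : ¬(Hgraph G A B).Adj (.inr e) (.inr f) :=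
  id

end Hgraph

theorem PHle.not_inr_inr {V : Type*} {G : SimpleGraph V} {A B : Set V} {e f : G.edgeSet}
    (hef : e ≠ f) : ¬PHle G A B (.inr e) (.inr f) :=
  hef

theorem Hgraph_comparability_general {V : Type*} (G : SimpleGraph V) (A B : Set V)
    (hcover : A ∪ B = Set.univ) :
    ∀ u v : V ⊕ G.edgeSet, u ≠ v →
      ((Hgraph G A B).Adj u v ↔ (PHle G A B u v ∨ PHle G A B v u)) := by
  have mem_cover (u : V) : u ∈ A ∪ B := hcover ▸ Set.mem_univ u
  rintro (u | e) (v | f) hne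
  · exact Hgraph.adj_inl_inl_iff G A B (mt (congrArg _) hne)
  · exact Hgraph.adj_inl_inr_iff G A B (mem_cover u) f
  · rw [SimpleGraph.adj_comm, or_comm]
    exact Hgraph.adj_inl_inr_iff G A B (mem_cover v) e
  · have hef : e ≠ f := mt (congrArg _) hne
    simp only [Hgraph.not_adj_inr_inr, PHle.not_inr_inr hef, PHle.not_inr_inr hef.symm,
      or_self]

/-- `H` is the comparability graph of the poset `P_H`: two distinct vertices
are adjacent in `H` iff they are comparable in `P_H`. -/
theorem Hgraph_comparability {V : Type*} [Finite V] (G : SimpleGraph V) (A B : Set V)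
    (hdisj : Disjoint A B) (hcover : A ∪ B = Set.univ)
    (hedge : ∀ e : G.edgeSet, ∃ a ∈ A, ∃ b ∈ B, (e : Sym2 V) = s(a, b)) :
    ∀ u v : V ⊕ G.edgeSet, u ≠ v →
      ((Hgraph G A B).Adj u v ↔ (PHle G A B u v ∨ PHle G A B v u)) :=
  Hgraph_comparability_general G A B hcover
end

section
/- Let G be a connected bipartite graph with bipartition (A, B), |A|, |B| ≥ 3, and let H be the associated graph (subdivided edges plus complete bipartite between A and B). Then G can be recovered from H up to isomorphism: the graph obtained from H by taking the vertices of degree ≥ 3 as vertex set and joining u, v of different parts whenever they have a common neighbor of degree 2 is isomorphic to G. -/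
/-!
The vertices of degree 2 in `H` are exactly the subdivision vertices `c_e`: each `c_e` is adjacent
only to the two ends of `e`, while a vertex of `A` (resp. `B`) is adjacent to every vertex of `B`
(resp. `A`), of which there are at least three. Hence two vertices of different parts have a
common neighbour of degree 2 exactly when they are the two ends of an edge of `G`.
-/

namespace Hgraph

variable {V : Type*} {G : SimpleGraph V} {A B : Set V}

lemma adj_inl_inl_of_mem (hdisj : Disjoint A B) {a b : V} (ha : a ∈ A) (hb : b ∈ B) :
    (Hgraph G A B).Adj (Sum.inl a) (Sum.inl b) :=
  ⟨hdisj.ne_of_mem ha hb, Or.inl ⟨ha, hb⟩⟩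

lemma ncard_neighborSet_inr (e : G.edgeSet) :
    ((Hgraph G A B).neighborSet (Sum.inr e)).ncard = 2 := by
  obtain ⟨e, he⟩ := e
  induction e using Sym2.ind with
  | h u v =>
    have hnbr : (Hgraph G A B).neighborSet (Sum.inr ⟨s(u, v), he⟩) =
        {Sum.inl u, Sum.inl v} := by
      ext (w | f) <;> simp [SimpleGraph.mem_neighborSet, Hgraph]
    rw [hnbr, Set.ncard_pair (Sum.inl_injective.ne (G.ne_of_adj he))]

lemma ncard_neighborSet_inl_ne_two (hdisj : Disjoint A B) (hcover : A ∪ B = Set.univ)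
    (hA : 3 ≤ A.ncard) (hB : 3 ≤ B.ncard) (w : V) :
    ((Hgraph G A B).neighborSet (Sum.inl w)).ncard ≠ 2 := by
  intro h2
  have hfin := Set.finite_of_ncard_ne_zero (h2 ▸ two_ne_zero)
  have hle : ∀ S : Set V, Sum.inl '' S ⊆ (Hgraph G A B).neighborSet (Sum.inl w) →
      S.ncard ≤ 2 := fun S hS =>
    h2 ▸ Set.ncard_image_of_injective S Sum.inl_injective ▸ Set.ncard_le_ncard hS hfin
  rcases (hcover ▸ Set.mem_univ w : w ∈ A ∪ B) with hw | hw
  · have := hle B fun _ ⟨b, hb, hwb⟩ => hwb ▸ adj_inl_inl_of_mem (G := G) hdisj hw hb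
    omega
  · have := hle A fun _ ⟨a, ha, hwa⟩ => hwa ▸ (adj_inl_inl_of_mem (G := G) hdisj ha hw).symm
    omega

lemma ncard_neighborSet_eq_two_iff (hdisj : Disjoint A B) (hcover : A ∪ B = Set.univ)
    (hA : 3 ≤ A.ncard) (hB : 3 ≤ B.ncard) (c : V ⊕ G.edgeSet) :
    ((Hgraph G A B).neighborSet c).ncard = 2 ↔ ∃ e, c = Sum.inr e := by
  rcases c with w | e
  · simpa using ncard_neighborSet_inl_ne_two hdisj hcover hA hB w
  · simpa using ncard_neighborSet_inr e

end Hgraph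

lemma SimpleGraph.mem_parts_of_adj {V : Type*} {G : SimpleGraph V} {A B : Set V}
    (hedge : ∀ e : G.edgeSet, ∃ a ∈ A, ∃ b ∈ B, (e : Sym2 V) = s(a, b)) {u v : V}
    (h : G.Adj u v) : (u ∈ A ∧ v ∈ B) ∨ (u ∈ B ∧ v ∈ A) := by
  obtain ⟨a, ha, b, hb, he⟩ := hedge ⟨s(u, v), h⟩
  rcases Sym2.eq_iff.mp he with ⟨rfl, rfl⟩ | ⟨rfl, rfl⟩
  · exact Or.inl ⟨ha, hb⟩
  · exact Or.inr ⟨hb, ha⟩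

theorem recover_G_from_H_general {V : Type*} (G : SimpleGraph V) (A B : Set V)
    (hdisj : Disjoint A B) (hcover : A ∪ B = Set.univ)
    (hedge : ∀ e : G.edgeSet, ∃ a ∈ A, ∃ b ∈ B, (e : Sym2 V) = s(a, b))
    (hA : 3 ≤ A.ncard) (hB : 3 ≤ B.ncard) :
    ∀ u v : V, G.Adj u v ↔
      (((u ∈ A ∧ v ∈ B) ∨ (u ∈ B ∧ v ∈ A)) ∧
        ∃ c : V ⊕ G.edgeSet, ((Hgraph G A B).neighborSet c).ncard = 2 ∧
          (Hgraph G A B).Adj (Sum.inl u) c ∧ (Hgraph G A B).Adj (Sum.inl v) c) := by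
  intro u v
  constructor
  · intro h
    exact ⟨G.mem_parts_of_adj hedge h, Sum.inr ⟨s(u, v), h⟩, Hgraph.ncard_neighborSet_inr _,
      Sym2.mem_mk_left u v, Sym2.mem_mk_right u v⟩
  · rintro ⟨hparts, c, hc2, hu, hv⟩
    obtain ⟨e, rfl⟩ := (Hgraph.ncard_neighborSet_eq_two_iff hdisj hcover hA hB c).mp hc2
    have hne : u ≠ v := by
      rcases hparts with ⟨huA, hvB⟩ | ⟨huB, hvA⟩
      · exact hdisj.ne_of_mem huA hvB
      · exact (hdisj.ne_of_mem hvA huB).symm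
    exact G.adj_iff_exists_edge.mpr ⟨hne, e, e.2, hu, hv⟩

/-- `G` can be recovered from `H`: two vertices `u, v` of different parts are
adjacent in `G` iff they have a common neighbor of degree 2 in `H`. -/
theorem recover_G_from_H {V : Type*} [Finite V] (G : SimpleGraph V) (A B : Set V)
    (hconn : G.Connected) (hdisj : Disjoint A B) (hcover : A ∪ B = Set.univ)
    (hedge : ∀ e : G.edgeSet, ∃ a ∈ A, ∃ b ∈ B, (e : Sym2 V) = s(a, b))
    (hA : 3 ≤ A.ncard) (hB : 3 ≤ B.ncard) :
    ∀ u v : V, G.Adj u v ↔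
      (((u ∈ A ∧ v ∈ B) ∨ (u ∈ B ∧ v ∈ A)) ∧
        ∃ c : V ⊕ G.edgeSet, ((Hgraph G A B).neighborSet c).ncard = 2 ∧
          (Hgraph G A B).Adj (Sum.inl u) c ∧ (Hgraph G A B).Adj (Sum.inl v) c) :=
  recover_G_from_H_general G A B hdisj hcover hedge hA hB
end

section
/- The poset P_H constructed from a connected bipartite graph G with bipartition (A, B), where |A|, |B| ≥ 1 and E(G) ≠ ∅, has interval dimension at most 2: there exist two interval representations I₁, I₂ of V(P_H) = A ∪ B ∪ C such that for all x, y, x ≺ y in P_H iff I₁(x) lies strictly left of I₁(y) and I₂(x) lies strictly left of I₂(y). -/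
/-!
Number the vertices injectively by `p : V → ℤ`. In the first interval order the vertices of `A`
are points in increasing `p`-order, those of `B` are points above all of them in decreasing
`p`-order, and `c_e`, for `e = ab`, runs from `p a + 1` to just below the point of `b`. As the
positions are integers, `a' ≺ c_e` iff `p a' ≤ p a` and `c_e ≺ b'` iff `p b' ≤ p b`. The second
interval order is the same construction for `-p`, which reverses all these comparisons, so in the
intersection `c_e` is comparable only to the endpoints of `e`, and two vertices on the same side
are incomparable.
-/

open Function Sum

theorem Finite.exists_add_add_two_le {V : Type*} [Finite V] (q : V → ℤ) :
    ∃ K : ℤ, ∀ u v, q u + q v + 2 ≤ K := by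
  obtain ⟨M, hM⟩ := Finite.exists_le q
  exact ⟨2 * M + 2, fun u v => by linarith [hM u, hM v]⟩

namespace PHle

variable {V : Type*} {G : SimpleGraph V}

section Representation

variable (A : Set V) [DecidablePred (· ∈ A)] (a b : G.edgeSet → V) (q : V → ℤ) (K : ℤ)

def vertexPoint (u : V) : ℤ := if u ∈ A then q u else K - q u

def leftEnd : V ⊕ G.edgeSet → ℤ := Sum.elim (vertexPoint A q K) fun e => q (a e) + 1

def rightEnd : V ⊕ G.edgeSet → ℤ := Sum.elim (vertexPoint A q K) fun e => K - 1 - q (b e)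

def Precedes (x y : V ⊕ G.edgeSet) : Prop := rightEnd A b q K x < leftEnd A a q K y

variable {A a b q K}

theorem leftEnd_le_rightEnd (hK : ∀ u v, q u + q v + 2 ≤ K) (x : V ⊕ G.edgeSet) :
    leftEnd A a q K x ≤ rightEnd A b q K x := by
  rcases x with u | e
  · exact le_rfl
  · have := hK (a e) (b e)
    simp only [leftEnd, rightEnd, elim_inr]
    omega

theorem precedes_inl_inl_and_precedes_iff {K₁ K₂ : ℤ} (hK₁ : ∀ u v, q u + q v + 2 ≤ K₁)
    (hK₂ : ∀ u v, (-q) u + (-q) v + 2 ≤ K₂) (u v : V) :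
    Precedes A a b q K₁ (inl u) (inl v) ∧ Precedes A a b (-q) K₂ (inl u) (inl v) ↔
      u ∈ A ∧ v ∉ A := by
  have := hK₁ u v
  have := hK₂ u v
  simp only [Precedes, leftEnd, rightEnd, elim_inl, vertexPoint, Pi.neg_apply] at *
  split_ifs with hu hv hv
  · simp only [hu, hv, not_true_eq_false, and_false, iff_false]
    omega
  · simp only [hu, hv, not_false_eq_true, and_self, iff_true]
    omega
  · simp only [hu, false_and, iff_false]
    omega
  · simp only [hu, false_and, iff_false]
    omega

theorem precedes_inl_inr_iff (hK : ∀ u v, q u + q v + 2 ≤ K) (u : V) (e : G.edgeSet) :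
    Precedes A a b q K (inl u) (inr e) ↔ u ∈ A ∧ q u ≤ q (a e) := by
  have := hK u (a e)
  simp only [Precedes, leftEnd, rightEnd, elim_inl, elim_inr, vertexPoint]
  split_ifs with hu
  · simp only [hu, true_and]
    omega
  · simp only [hu, false_and, iff_false]
    omega

theorem precedes_inr_inl_iff (hK : ∀ u v, q u + q v + 2 ≤ K) (e : G.edgeSet) (v : V) :
    Precedes A a b q K (inr e) (inl v) ↔ v ∉ A ∧ q v ≤ q (b e) := by
  have := hK (b e) v
  simp only [Precedes, leftEnd, rightEnd, elim_inl, elim_inr, vertexPoint]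
  split_ifs with hv
  · simp only [hv, not_true_eq_false, false_and, iff_false]
    omega
  · simp only [hv, not_false_eq_true, true_and]
    omega

theorem not_precedes_inr_inr (hK : ∀ u v, q u + q v + 2 ≤ K) (e f : G.edgeSet) :
    ¬Precedes A a b q K (inr e) (inr f) := by
  have := hK (a f) (b e)
  simp only [Precedes, leftEnd, rightEnd, elim_inr]
  omega

end Representation

theorem and_ne_iff_precedes_and_precedes {A : Set V} [DecidablePred (· ∈ A)]
    {a b : G.edgeSet → V} (ha : ∀ e, a e ∈ A) (hb : ∀ e, b e ∉ A)
    (he : ∀ e : G.edgeSet, (e : Sym2 V) = s(a e, b e)) {p : V → ℤ} (hp : Injective p)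
    {K₁ K₂ : ℤ} (hK₁ : ∀ u v, p u + p v + 2 ≤ K₁) (hK₂ : ∀ u v, (-p) u + (-p) v + 2 ≤ K₂)
    (x y : V ⊕ G.edgeSet) :
    PHle G A Aᶜ x y ∧ x ≠ y ↔ Precedes A a b p K₁ x y ∧ Precedes A a b (-p) K₂ x y := by
  have mem_iff_of_mem {u} {e : G.edgeSet} (hu : u ∈ A) : u ∈ (e : Sym2 V) ↔ u = a e := by
    rw [he, Sym2.mem_iff, or_iff_left]
    exact ne_of_mem_of_not_mem hu (hb e)
  have mem_iff_of_not_mem {v} {e : G.edgeSet} (hv : v ∉ A) : v ∈ (e : Sym2 V) ↔ v = b e := by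
    rw [he, Sym2.mem_iff, or_iff_right]
    exact (ne_of_mem_of_not_mem (ha e) hv).symm
  rcases x with u | e <;> rcases y with v | f
  · rw [precedes_inl_inl_and_precedes_iff hK₁ hK₂]
    simp only [PHle, Set.mem_compl_iff, ne_eq, inl.injEq]
    constructor
    · rintro ⟨rfl | h, hne⟩
      · exact absurd rfl hne
      · exact h
    · rintro ⟨hu, hv⟩
      exact ⟨Or.inr ⟨hu, hv⟩, ne_of_mem_of_not_mem hu hv⟩
  · rw [precedes_inl_inr_iff hK₁, precedes_inl_inr_iff hK₂]
    simp only [PHle, ne_eq, reduceCtorEq, not_false_eq_true, and_true, Pi.neg_apply,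
      neg_le_neg_iff]
    constructor
    · rintro ⟨hu, huf⟩
      rw [mem_iff_of_mem hu] at huf
      subst huf
      exact ⟨⟨hu, le_rfl⟩, hu, le_rfl⟩
    · rintro ⟨⟨hu, h₁⟩, -, h₂⟩
      exact ⟨hu, (mem_iff_of_mem hu).2 (hp (le_antisymm h₁ h₂))⟩
  · rw [precedes_inr_inl_iff hK₁, precedes_inr_inl_iff hK₂]
    simp only [PHle, ne_eq, reduceCtorEq, not_false_eq_true, and_true, Pi.neg_apply,
      neg_le_neg_iff]
    constructor
    · rintro ⟨hv, hve⟩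
      rw [mem_iff_of_not_mem hv] at hve
      subst hve
      exact ⟨⟨hv, le_rfl⟩, hv, le_rfl⟩
    · rintro ⟨⟨hv, h₁⟩, -, h₂⟩
      exact ⟨hv, (mem_iff_of_not_mem hv).2 (hp (le_antisymm h₁ h₂))⟩
  · exact iff_of_false (fun h => h.2 (congrArg inr h.1))
      fun h => not_precedes_inr_inr hK₁ e f h.1

end PHle

theorem PHle_intervalDim_le_two_general {V : Type*} [Finite V] (G : SimpleGraph V) (A B : Set V)
    (hdisj : Disjoint A B) (hcover : A ∪ B = Set.univ)
    (hedge : ∀ e : G.edgeSet, ∃ a ∈ A, ∃ b ∈ B, (e : Sym2 V) = s(a, b)) :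
    ∃ l₁ r₁ l₂ r₂ : (V ⊕ G.edgeSet) → ℝ,
      (∀ x, l₁ x ≤ r₁ x) ∧ (∀ x, l₂ x ≤ r₂ x) ∧
      ∀ x y : V ⊕ G.edgeSet,
        (PHle G A B x y ∧ x ≠ y) ↔ (r₁ x < l₁ y ∧ r₂ x < l₂ y) := by
  classical
  obtain rfl : B = Aᶜ := (IsCompl.symm ⟨hdisj, codisjoint_iff.2 hcover⟩).eq_compl
  choose a ha b hb he using hedge
  obtain ⟨p, hp⟩ : ∃ p : V → ℤ, Injective p :=
    let ⟨f, hf⟩ := Countable.exists_injective_nat V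
    ⟨_, Nat.cast_injective.comp hf⟩
  obtain ⟨K₁, hK₁⟩ := Finite.exists_add_add_two_le p
  obtain ⟨K₂, hK₂⟩ := Finite.exists_add_add_two_le (-p)
  refine ⟨fun x => PHle.leftEnd A a p K₁ x, fun x => PHle.rightEnd A b p K₁ x,
    fun x => PHle.leftEnd A a (-p) K₂ x, fun x => PHle.rightEnd A b (-p) K₂ x,
    fun x => Int.cast_le.2 (PHle.leftEnd_le_rightEnd hK₁ x),
    fun x => Int.cast_le.2 (PHle.leftEnd_le_rightEnd hK₂ x), fun x y => ?_⟩
  rw [PHle.and_ne_iff_precedes_and_precedes ha hb he hp hK₁ hK₂]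
  simp only [PHle.Precedes, Int.cast_lt]

/-- The poset `P_H` has interval dimension at most 2: there are two interval
representations whose strict interval orders intersect in exactly the strict
order of `P_H`. -/
theorem PHle_intervalDim_le_two {V : Type*} [Finite V] (G : SimpleGraph V) (A B : Set V)
    (hconn : G.Connected) (hdisj : Disjoint A B) (hcover : A ∪ B = Set.univ)
    (hedge : ∀ e : G.edgeSet, ∃ a ∈ A, ∃ b ∈ B, (e : Sym2 V) = s(a, b))
    (hA : A.Nonempty) (hB : B.Nonempty) (hE : G.edgeSet.Nonempty) :
    ∃ l₁ r₁ l₂ r₂ : (V ⊕ G.edgeSet) → ℝ,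
      (∀ x, l₁ x ≤ r₁ x) ∧ (∀ x, l₂ x ≤ r₂ x) ∧
      ∀ x y : V ⊕ G.edgeSet,
        (PHle G A B x y ∧ x ≠ y) ↔ (r₁ x < l₁ y ∧ r₂ x < l₂ y) :=
  PHle_intervalDim_le_two_general G A B hdisj hcover hedge
end
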